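/- arXiv:2305.15388 — 3 statements merged into one kernel-verified Lean document; each statement's English description precedes it below -/
import Mathlib

section
/- With x = Re(b₁|h|² + b₂ h̄ e^{-if}) and y = Im(b₁|h|² + b₂ h̄ e^{-if}), where h = m+i·n, m,n i.i.d. N(0,1/2), b₁ = |b₁|e^{iφ₁}, b₂ = |b₂|e^{iφ₂}, f ∈ ℝ, the covariance Cov(x,y) equals |b₁|² cos(φ₁) sin(φ₁). -/
open MeasureTheory ProbabilityTheory Complex

/-!
Write `h = m + n i` and `c = b₂ e^{-if}`. Then
`x = Re b₁ · (m² + n²) + (Re c · m + Im c · n)` and `y = Im b₁ · (m² + n²) + (Im c · m - Re c · n)`,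
and the coefficient vectors of the two linear parts are orthogonal. Every expectation splits into
products `E[m^a] E[n^b]` of moments of `N(0, v)`, which come from the Gaussian integration by
parts `E[X^(k+2)] = (k+1) v E[X^k]`. Odd moments vanish, so `m² + n²` is uncorrelated with the
linear parts, and the orthogonal linear parts are uncorrelated with each other. What remains is
`Re b₁ Im b₁ Var(m² + n²) = Re b₁ Im b₁ (8v² - 4v²)`, i.e. `|b₁|² cos φ₁ sin φ₁` at `v = 1/2`.
-/

namespace Complex

lemma re_mul_ofReal_add_mul_conj (b c : ℂ) (r s t : ℝ) :
    (b * r + c * starRingEnd ℂ (s + t * I)).re = b.re * r + (c.re * s + c.im * t) := by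
  simp

lemma im_mul_ofReal_add_mul_conj (b c : ℂ) (r s t : ℝ) :
    (b * r + c * starRingEnd ℂ (s + t * I)).im = b.im * r + (c.im * s + -c.re * t) := by
  simp
  ring

end Complex

namespace ProbabilityTheory
open Real
open scoped NNReal

lemma hasDerivAt_gaussianPDFReal (μ : ℝ) (v : ℝ≥0) (x : ℝ) :
    HasDerivAt (gaussianPDFReal μ v) (-((x - μ) / v) * gaussianPDFReal μ v x) x := by
  have hexp : HasDerivAt (fun x : ℝ ↦ rexp (-(x - μ) ^ 2 / (2 * v)))
      (rexp (-(x - μ) ^ 2 / (2 * v)) * (-(2 * (x - μ)) / (2 * v))) x := by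
    refine HasDerivAt.exp ?_
    simpa using (((hasDerivAt_id x).sub_const μ).pow 2).neg.div_const (2 * (v : ℝ))
  rw [gaussianPDFReal_def]
  refine (hexp.const_mul (√(2 * π * v))⁻¹).congr_deriv ?_
  rcases eq_or_ne (v : ℝ) 0 with hv | hv
  · simp [hv]
  · field_simp

lemma integrable_pow_mul_gaussianPDFReal {v : ℝ≥0} (hv : v ≠ 0) (k : ℕ) :
    Integrable fun x ↦ x ^ k * gaussianPDFReal 0 v x := by
  have hb : 0 < (2 * (v : ℝ))⁻¹ := by positivity
  have := (integrable_rpow_mul_exp_neg_mul_sq hb (s := k)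
    (neg_one_lt_zero.trans_le k.cast_nonneg)).const_mul (√(2 * π * v))⁻¹
  refine this.congr (ae_of_all _ fun x ↦ ?_)
  simp only [gaussianPDFReal, Real.rpow_natCast, sub_zero]
  ring_nf

lemma integral_pow_add_two_mul_gaussianPDFReal {v : ℝ≥0} (hv : v ≠ 0) (k : ℕ) :
    ∫ x, x ^ (k + 2) * gaussianPDFReal 0 v x
      = (k + 1) * v * ∫ x, x ^ k * gaussianPDFReal 0 v x := by
  have hv' : (v : ℝ) ≠ 0 := by exact_mod_cast hv
  have hderiv (x : ℝ) : HasDerivAt (fun x ↦ x ^ (k + 1) * gaussianPDFReal 0 v x)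
      ((k + 1) * (x ^ k * gaussianPDFReal 0 v x) - x ^ (k + 2) * gaussianPDFReal 0 v x / v) x := by
    refine ((hasDerivAt_pow (k + 1) x).mul (hasDerivAt_gaussianPDFReal 0 v x)).congr_deriv ?_
    push_cast
    field_simp
    ring
  have h0 := integral_eq_zero_of_hasDerivAt_of_integrable hderiv
    (((integrable_pow_mul_gaussianPDFReal hv k).const_mul _).sub
      ((integrable_pow_mul_gaussianPDFReal hv (k + 2)).div_const _))
    (integrable_pow_mul_gaussianPDFReal hv (k + 1))
  rw [integral_sub ((integrable_pow_mul_gaussianPDFReal hv k).const_mul _)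
      ((integrable_pow_mul_gaussianPDFReal hv (k + 2)).div_const _),
    integral_const_mul, integral_div, sub_eq_zero] at h0
  field_simp at h0
  linarith

lemma integral_pow_add_two_gaussianReal (v : ℝ≥0) (k : ℕ) :
    ∫ x, x ^ (k + 2) ∂gaussianReal 0 v = (k + 1) * v * ∫ x, x ^ k ∂gaussianReal 0 v := by
  rcases eq_or_ne v 0 with rfl | hv
  · simp
  simp only [integral_gaussianReal_eq_integral_smul hv, smul_eq_mul,
    mul_comm (gaussianPDFReal 0 v _)]
  exact integral_pow_add_two_mul_gaussianPDFReal hv k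

lemma integral_sq_gaussianReal (v : ℝ≥0) : ∫ x, x ^ 2 ∂gaussianReal 0 v = v := by
  simpa using integral_pow_add_two_gaussianReal v 0

lemma integral_pow_three_gaussianReal (v : ℝ≥0) : ∫ x, x ^ 3 ∂gaussianReal 0 v = 0 := by
  simpa using integral_pow_add_two_gaussianReal v 1

lemma integral_pow_four_gaussianReal (v : ℝ≥0) : ∫ x, x ^ 4 ∂gaussianReal 0 v = 3 * v ^ 2 := by
  rw [integral_pow_add_two_gaussianReal v 2, integral_sq_gaussianReal]
  norm_num
  ring

lemma integrable_pow_gaussianReal (μ : ℝ) (v : ℝ≥0) (k : ℕ) :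
    Integrable (fun x ↦ x ^ k) (gaussianReal μ v) :=
  integrable_pow_of_mem_interior_integrableExpSet (by simp) k

section IndependentGaussians

variable {Ω : Type*} [MeasurableSpace Ω] {μ : Measure Ω} {m n : Ω → ℝ} {v w : ℝ≥0}

lemma HasLaw.integrable_pow_of_gaussianReal (hm : HasLaw m (gaussianReal 0 v) μ) (k : ℕ) :
    Integrable (fun ω ↦ m ω ^ k) μ :=
  (integrable_map_measure (continuous_pow k).aestronglyMeasurable hm.aemeasurable).1
    (hm.map_eq ▸ integrable_pow_gaussianReal 0 v k)

lemma HasLaw.integral_pow (hm : HasLaw m (gaussianReal 0 v) μ) (k : ℕ) :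
    ∫ ω, m ω ^ k ∂μ = ∫ x, x ^ k ∂gaussianReal 0 v :=
  hm.integral_comp (f := fun x ↦ x ^ k) (continuous_pow k).aestronglyMeasurable

lemma IndepFun.integrable_pow_mul_pow (hmn : IndepFun m n μ) (hm : HasLaw m (gaussianReal 0 v) μ)
    (hn : HasLaw n (gaussianReal 0 w) μ) (a b : ℕ) :
    Integrable (fun ω ↦ m ω ^ a * n ω ^ b) μ :=
  (hmn.comp (measurable_id.pow_const a) (measurable_id.pow_const b)).integrable_mul
    (hm.integrable_pow_of_gaussianReal a) (hn.integrable_pow_of_gaussianReal b)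

lemma IndepFun.integral_pow_mul_pow (hmn : IndepFun m n μ) (hm : HasLaw m (gaussianReal 0 v) μ)
    (hn : HasLaw n (gaussianReal 0 w) μ) (a b : ℕ) :
    ∫ ω, m ω ^ a * n ω ^ b ∂μ
      = (∫ x, x ^ a ∂gaussianReal 0 v) * ∫ x, x ^ b ∂gaussianReal 0 w := by
  rw [← hm.integral_pow, ← hn.integral_pow]
  exact (hmn.comp (measurable_id.pow_const a) (measurable_id.pow_const b))
    |>.integral_mul_eq_mul_integral (hm.integrable_pow_of_gaussianReal a).aestronglyMeasurable
    (hn.integrable_pow_of_gaussianReal b).aestronglyMeasurable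

lemma integral_sq_add_sq_add_linear (hmn : IndepFun m n μ)
    (hm : HasLaw m (gaussianReal 0 v) μ) (hn : HasLaw n (gaussianReal 0 v) μ) (a p q : ℝ) :
    ∫ ω, a * (m ω ^ 2 + n ω ^ 2) + (p * m ω + q * n ω) ∂μ = 2 * v * a := by
  have hint := hmn.integrable_pow_mul_pow hm hn
  calc ∫ ω, a * (m ω ^ 2 + n ω ^ 2) + (p * m ω + q * n ω) ∂μ
      = ∫ ω, a * (m ω ^ 2 * n ω ^ 0) + a * (m ω ^ 0 * n ω ^ 2)
          + p * (m ω ^ 1 * n ω ^ 0) + q * (m ω ^ 0 * n ω ^ 1) ∂μ := by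
        congr 1 with ω; ring
    _ = 2 * v * a := by
        -- `fun_prop` proves the integrability side conditions from `hint`
        simp (disch := fun_prop) only [integral_add, integral_const_mul,
          hmn.integral_pow_mul_pow hm hn]
        simp [integral_sq_gaussianReal, integral_id_gaussianReal]
        ring

lemma integral_sq_add_sq_add_linear_mul (hmn : IndepFun m n μ)
    (hm : HasLaw m (gaussianReal 0 v) μ) (hn : HasLaw n (gaussianReal 0 v) μ)
    (a p q b r s : ℝ) :
    ∫ ω, (a * (m ω ^ 2 + n ω ^ 2) + (p * m ω + q * n ω))
        * (b * (m ω ^ 2 + n ω ^ 2) + (r * m ω + s * n ω)) ∂μ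
      = 8 * v ^ 2 * a * b + v * (p * r + q * s) := by
  have hint := hmn.integrable_pow_mul_pow hm hn
  calc ∫ ω, (a * (m ω ^ 2 + n ω ^ 2) + (p * m ω + q * n ω))
        * (b * (m ω ^ 2 + n ω ^ 2) + (r * m ω + s * n ω)) ∂μ
      = ∫ ω, a * b * (m ω ^ 4 * n ω ^ 0) + 2 * a * b * (m ω ^ 2 * n ω ^ 2)
          + a * b * (m ω ^ 0 * n ω ^ 4)
          + (a * r + b * p) * (m ω ^ 3 * n ω ^ 0) + (a * r + b * p) * (m ω ^ 1 * n ω ^ 2)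
          + (a * s + b * q) * (m ω ^ 2 * n ω ^ 1) + (a * s + b * q) * (m ω ^ 0 * n ω ^ 3)
          + p * r * (m ω ^ 2 * n ω ^ 0) + (p * s + q * r) * (m ω ^ 1 * n ω ^ 1)
          + q * s * (m ω ^ 0 * n ω ^ 2) ∂μ := by
        congr 1 with ω; ring
    _ = 8 * v ^ 2 * a * b + v * (p * r + q * s) := by
        simp (disch := fun_prop) only [integral_add, integral_const_mul,
          hmn.integral_pow_mul_pow hm hn]
        simp [integral_sq_gaussianReal, integral_pow_three_gaussianReal,
          integral_pow_four_gaussianReal, integral_id_gaussianReal]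
        ring

end IndependentGaussians

end ProbabilityTheory

theorem covariance_x_y_general
    {Ω : Type*} [MeasurableSpace Ω] (μ : Measure Ω)
    (m n : Ω → ℝ)
    (hm : μ.map m = gaussianReal 0 (1 / 2)) (hn : μ.map n = gaussianReal 0 (1 / 2))
    (hmn : IndepFun m n μ)
    (h : Ω → ℂ) (hh : ∀ ω, h ω = (m ω : ℂ) + (n ω : ℂ) * Complex.I)
    (f : ℝ) (b₁ b₂ : ℂ)
    (φ₁ : ℝ)
    (hb₁ : b₁ = (‖b₁‖ : ℂ) * Complex.exp (φ₁ * Complex.I))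
    (x : Ω → ℝ)
    (hx : ∀ ω, x ω = (b₁ * ((‖h ω‖ : ℂ)) ^ 2
        + b₂ * (starRingEnd ℂ) (h ω) * Complex.exp (-(f : ℂ) * Complex.I)).re)
    (y : Ω → ℝ)
    (hy : ∀ ω, y ω = (b₁ * ((‖h ω‖ : ℂ)) ^ 2
        + b₂ * (starRingEnd ℂ) (h ω) * Complex.exp (-(f : ℂ) * Complex.I)).im) :
    (∫ ω, x ω * y ω ∂μ) - (∫ ω, x ω ∂μ) * (∫ ω, y ω ∂μ)
      = ‖b₁‖ ^ 2 * Real.cos φ₁ * Real.sin φ₁ := by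
  have hm' : HasLaw m (gaussianReal 0 (1 / 2)) μ :=
    ⟨.of_map_ne_zero (hm ▸ IsProbabilityMeasure.ne_zero _), hm⟩
  have hn' : HasLaw n (gaussianReal 0 (1 / 2)) μ :=
    ⟨.of_map_ne_zero (hn ▸ IsProbabilityMeasure.ne_zero _), hn⟩
  set c := b₂ * Complex.exp (-(f : ℂ) * Complex.I)
  have hnormSq (ω : Ω) : ((‖h ω‖ : ℂ)) ^ 2 = ((m ω ^ 2 + n ω ^ 2 : ℝ) : ℂ) := by
    rw [hh, ← ofReal_pow, Complex.sq_norm, normSq_add_mul_I]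
  obtain rfl : x = fun ω ↦ b₁.re * (m ω ^ 2 + n ω ^ 2) + (c.re * m ω + c.im * n ω) := by
    ext ω
    rw [hx, hnormSq, hh, mul_right_comm, re_mul_ofReal_add_mul_conj]
  obtain rfl : y = fun ω ↦ b₁.im * (m ω ^ 2 + n ω ^ 2) + (c.im * m ω + -c.re * n ω) := by
    ext ω
    rw [hy, hnormSq, hh, mul_right_comm, im_mul_ofReal_add_mul_conj]
  have hre : b₁.re = ‖b₁‖ * Real.cos φ₁ := by
    simpa [re_ofReal_mul, exp_ofReal_mul_I_re] using congrArg re hb₁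
  have him : b₁.im = ‖b₁‖ * Real.sin φ₁ := by
    simpa [im_ofReal_mul, exp_ofReal_mul_I_im] using congrArg im hb₁
  rw [integral_sq_add_sq_add_linear_mul hmn hm' hn', integral_sq_add_sq_add_linear hmn hm' hn',
    integral_sq_add_sq_add_linear hmn hm' hn', hre, him]
  norm_num
  ring

/-- Covariance of `x` and `y`: it equals `|b₁|² cos(φ₁) sin(φ₁)`. -/
theorem covariance_x_y
    {Ω : Type*} [MeasurableSpace Ω] (μ : Measure Ω) [IsProbabilityMeasure μ]
    (m n : Ω → ℝ) (hmeas_m : Measurable m) (hmeas_n : Measurable n)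
    (hm : μ.map m = gaussianReal 0 (1 / 2)) (hn : μ.map n = gaussianReal 0 (1 / 2))
    (hmn : IndepFun m n μ)
    (h : Ω → ℂ) (hh : ∀ ω, h ω = (m ω : ℂ) + (n ω : ℂ) * Complex.I)
    (f : ℝ) (b₁ b₂ : ℂ)
    (φ₁ φ₂ : ℝ)
    (hb₁ : b₁ = (‖b₁‖ : ℂ) * Complex.exp (φ₁ * Complex.I))
    (hb₂ : b₂ = (‖b₂‖ : ℂ) * Complex.exp (φ₂ * Complex.I))
    (x : Ω → ℝ)
    (hx : ∀ ω, x ω = (b₁ * ((‖h ω‖ : ℂ)) ^ 2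
        + b₂ * (starRingEnd ℂ) (h ω) * Complex.exp (-(f : ℂ) * Complex.I)).re)
    (y : Ω → ℝ)
    (hy : ∀ ω, y ω = (b₁ * ((‖h ω‖ : ℂ)) ^ 2
        + b₂ * (starRingEnd ℂ) (h ω) * Complex.exp (-(f : ℂ) * Complex.I)).im) :
    (∫ ω, x ω * y ω ∂μ) - (∫ ω, x ω ∂μ) * (∫ ω, y ω ∂μ)
      = ‖b₁‖ ^ 2 * Real.cos φ₁ * Real.sin φ₁ :=
  covariance_x_y_general μ m n hm hn hmn h hh f b₁ b₂ φ₁ hb₁ x hx y hy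
end

section
/- With x = Re(b₁|h|² + b₂ h̄ e^{-if}) and k = |b₁ h + b₂ e^{-if}|², where h = m+i·n, m,n i.i.d. N(0,1/2), b₁ = |b₁|e^{iφ₁}, b₂ = |b₂|e^{iφ₂}, f ∈ ℝ, the covariance Cov(x,k) equals |b₁|(|b₁|² + |b₂|²) cos(φ₁); in particular it is independent of f and φ₂. -/
open MeasureTheory ProbabilityTheory Complex

section AuxCovXK
open Real
open scoped NNReal ENNReal

open scoped NNReal ENNReal

-- integrability of x^s exp(-x^2)
lemma aux_int_pow_gauss (s : ℕ) : Integrable (fun x : ℝ => x ^ s * Real.exp (-x^2)) := by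
  have hb : (0:ℝ) < 1/2 := by norm_num
  refine ((integrable_exp_neg_mul_sq hb).const_mul ((Nat.factorial s : ℝ) * Real.exp (1/2))).mono'
    ?_ (Filter.Eventually.of_forall fun x => ?_)
  · exact ((measurable_id.pow_const s).mul
      ((measurable_id.pow_const 2).neg.exp)).aestronglyMeasurable
  · have h1 : |x| ^ s ≤ (Nat.factorial s : ℝ) * Real.exp |x| := by
      have h := Real.pow_div_factorial_le_exp (x := |x|) (abs_nonneg x) s
      rw [div_le_iff₀ (by positivity : (0:ℝ) < (Nat.factorial s : ℝ))] at h
      linarith [h]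
    have h2 : Real.exp (|x| - x^2) ≤ Real.exp (1/2) * Real.exp (-(1/2) * x^2) := by
      rw [← Real.exp_add]
      apply Real.exp_le_exp.mpr
      nlinarith [_root_.sq_abs x, sq_nonneg (|x| - 1)]
    calc ‖x ^ s * Real.exp (-x^2)‖ = |x| ^ s * Real.exp (-x^2) := by
          rw [norm_mul, norm_pow, Real.norm_eq_abs, Real.norm_eq_abs, Real.abs_exp]
      _ ≤ ((Nat.factorial s : ℝ) * Real.exp |x|) * Real.exp (-x^2) := by
          apply mul_le_mul_of_nonneg_right h1 (Real.exp_pos _).le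
      _ = (Nat.factorial s : ℝ) * Real.exp (|x| - x^2) := by rw [mul_assoc, ← Real.exp_add]; ring_nf
      _ ≤ (Nat.factorial s : ℝ) * (Real.exp (1/2) * Real.exp (-(1/2) * x^2)) := by
          exact mul_le_mul_of_nonneg_left h2 (by positivity)
      _ = (Nat.factorial s : ℝ) * Real.exp (1/2) * Real.exp (-(1/2) * x^2) := by ring

lemma aux_J0 : ∫ x : ℝ, Real.exp (-x^2) = Real.sqrt π := by
  have := integral_gaussian 1
  simpa using this

lemma aux_Jodd (s : ℕ) (hs : Odd s) : ∫ x : ℝ, x ^ s * Real.exp (-x^2) = 0 := by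
  have h := MeasureTheory.integral_neg_eq_self (fun x : ℝ => x ^ s * Real.exp (-x^2)) volume
  simp only [hs.neg_pow, neg_sq, neg_mul] at h
  rw [MeasureTheory.integral_neg] at h
  linarith

lemma aux_Jstep (s : ℕ) : ∫ x : ℝ, x ^ (s+2) * Real.exp (-x^2)
    = ((s:ℝ)+1)/2 * ∫ x : ℝ, x ^ s * Real.exp (-x^2) := by
  have hu : ∀ y : ℝ, HasDerivAt (fun x : ℝ => x ^ (s+1)) (((s:ℝ)+1) * y ^ s) y := by
    intro y
    have := hasDerivAt_pow (s+1) y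
    simpa using this
  have hv : ∀ y : ℝ, HasDerivAt (fun x : ℝ => -(1/2) * Real.exp (-x^2))
      (y * Real.exp (-y^2)) y := by
    intro y
    have h1 : HasDerivAt (fun x : ℝ => -x^2) (-(2*y)) y := by
      simpa using ((hasDerivAt_pow 2 y).fun_neg)
    have h2 := (h1.exp).const_mul (-(1/2) : ℝ)
    convert h2 using 1
    · rfl
    · rfl
    · ring
  have hI : ∀ t : ℕ, Integrable (fun x : ℝ => x ^ t * Real.exp (-x^2)) := aux_int_pow_gauss
  have huv' : Integrable ((fun x : ℝ => x ^ (s+1)) * fun x : ℝ => x * Real.exp (-x^2)) := by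
    refine (hI (s+2)).congr (Filter.Eventually.of_forall fun x => ?_)
    simp [Pi.mul_apply]; ring
  have hu'v : Integrable ((fun x : ℝ => ((s:ℝ)+1) * x ^ s) * fun x : ℝ => -(1/2) * Real.exp (-x^2)) := by
    refine (((hI s).const_mul (((s:ℝ)+1) * (-(1/2)))).congr (Filter.Eventually.of_forall fun x => ?_))
    simp [Pi.mul_apply]; ring
  have huv : Integrable ((fun x : ℝ => x ^ (s+1)) * fun x : ℝ => -(1/2) * Real.exp (-x^2)) := by
    refine (((hI (s+1)).const_mul (-(1/2))).congr (Filter.Eventually.of_forall fun x => ?_))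
    simp [Pi.mul_apply]; ring
  have h := MeasureTheory.integral_mul_deriv_eq_deriv_mul_of_integrable (fun x _ => hu x) (fun x _ => hv x) huv' hu'v huv
  have h1 : ∫ x : ℝ, x ^ (s+1) * (x * Real.exp (-x^2)) = ∫ x : ℝ, x ^ (s+2) * Real.exp (-x^2) := by
    congr 1; ext x; ring
  have h2 : ∫ x : ℝ, ((s:ℝ)+1) * x ^ s * (-(1/2) * Real.exp (-x^2))
      = -(((s:ℝ)+1)/2) * ∫ x : ℝ, x ^ s * Real.exp (-x^2) := by
    rw [← integral_const_mul]
    congr 1; ext x; ring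
  rw [h1] at h
  rw [h2] at h
  rw [h]
  ring

lemma aux_pdf : gaussianPDFReal 0 (1/2) = fun x : ℝ => (Real.sqrt π)⁻¹ * Real.exp (-x^2) := by
  ext x
  rw [gaussianPDFReal]
  norm_num
  have h2 : Real.sqrt 2 ≠ 0 := by positivity
  have hπ : Real.sqrt π ≠ 0 := by positivity
  field_simp

lemma aux_pdf_meas : Measurable (fun x : ℝ => Real.toNNReal ((Real.sqrt π)⁻¹ * Real.exp (-x^2))) := by
  measurability

lemma aux_G_eq : gaussianReal 0 (1/2) = volume.withDensity
    (fun x : ℝ => ((Real.toNNReal ((Real.sqrt π)⁻¹ * Real.exp (-x^2)) : ℝ≥0) : ℝ≥0∞)) := by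
  rw [gaussianReal_of_var_ne_zero 0 (by norm_num)]
  congr 1
  ext x
  rw [gaussianPDF, aux_pdf]
  rfl

lemma aux_int_G (g : ℝ → ℝ) : ∫ y, g y ∂(gaussianReal 0 (1/2))
    = (Real.sqrt π)⁻¹ * ∫ y : ℝ, g y * Real.exp (-y^2) := by
  rw [aux_G_eq, integral_withDensity_eq_integral_smul aux_pdf_meas]
  rw [← integral_const_mul]
  congr 1
  ext y
  rw [NNReal.smul_def, Real.coe_toNNReal _ (by positivity)]
  simp only [smul_eq_mul]
  ring

lemma aux_IG (s : ℕ) : Integrable (fun y : ℝ => y ^ s) (gaussianReal 0 (1/2)) := by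
  rw [aux_G_eq, integrable_withDensity_iff_integrable_smul aux_pdf_meas]
  refine ((aux_int_pow_gauss s).const_mul ((Real.sqrt π)⁻¹)).congr
    (Filter.Eventually.of_forall fun y => ?_)
  show (√π)⁻¹ * (y ^ s * Real.exp (-y^2)) = ((√π)⁻¹ * Real.exp (-y^2)).toNNReal • y ^ s
  rw [NNReal.smul_def, Real.coe_toNNReal _ (by positivity)]
  simp only [smul_eq_mul]
  ring

noncomputable def auxMom : ℕ → ℝ := fun s =>
  if s = 0 then 1 else if s = 2 then 1/2 else if s = 4 then 3/4 else 0

lemma aux_MG (s : ℕ) (hs : s < 5) : ∫ y, y ^ s ∂(gaussianReal 0 (1/2)) = auxMom s := by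
  have hπ : Real.sqrt π ≠ 0 := by positivity
  interval_cases s
  · simp [auxMom]
  · rw [aux_int_G, aux_Jodd 1 (by decide)]; simp [auxMom]
  · rw [aux_int_G]
    have h := aux_Jstep 0
    simp only [pow_zero, one_mul] at h
    have : ∫ y : ℝ, y ^ 2 * Real.exp (-y^2) = 1/2 * Real.sqrt π := by
      rw [h, aux_J0]; norm_num
    rw [this]
    norm_num [auxMom]
    field_simp
  · rw [aux_int_G, aux_Jodd 3 (by decide)]; simp [auxMom]
  · rw [aux_int_G]
    have h0 := aux_Jstep 0
    simp only [pow_zero, one_mul] at h0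
    have h2 := aux_Jstep 2
    rw [h0, aux_J0] at h2
    have : ∫ y : ℝ, y ^ 4 * Real.exp (-y^2) = 3/4 * Real.sqrt π := by
      rw [h2]; ring
    rw [this]
    norm_num [auxMom]
    field_simp


end AuxCovXK

/-- Covariance of `x` and `k`: it equals `|b₁|(|b₁|² + |b₂|²) cos(φ₁)`,
in particular it is independent of `f` and `φ₂`. -/
theorem covariance_x_k
    {Ω : Type*} [MeasurableSpace Ω] (μ : Measure Ω) [IsProbabilityMeasure μ]
    (m n : Ω → ℝ) (hmeas_m : Measurable m) (hmeas_n : Measurable n)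
    (hm : μ.map m = gaussianReal 0 (1 / 2)) (hn : μ.map n = gaussianReal 0 (1 / 2))
    (hmn : IndepFun m n μ)
    (h : Ω → ℂ) (hh : ∀ ω, h ω = (m ω : ℂ) + (n ω : ℂ) * Complex.I)
    (f : ℝ) (b₁ b₂ : ℂ)
    (φ₁ φ₂ : ℝ)
    (hb₁ : b₁ = ((‖b₁‖ : ℝ) : ℂ) * Complex.exp (φ₁ * Complex.I))
    (hb₂ : b₂ = ((‖b₂‖ : ℝ) : ℂ) * Complex.exp (φ₂ * Complex.I))
    (x : Ω → ℝ)
    (hx : ∀ ω, x ω = (b₁ * (((‖h ω‖ : ℝ) : ℂ)) ^ 2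
        + b₂ * (starRingEnd ℂ) (h ω) * Complex.exp (-(f : ℂ) * Complex.I)).re)
    (k : Ω → ℝ)
    (hk : ∀ ω, k ω = ‖b₁ * h ω + b₂ * Complex.exp (-(f : ℂ) * Complex.I)‖ ^ 2) :
    (∫ ω, x ω * k ω ∂μ) - (∫ ω, x ω ∂μ) * (∫ ω, k ω ∂μ)
      = ‖b₁‖ * (‖b₁‖ ^ 2 + ‖b₂‖ ^ 2) * Real.cos φ₁ := by
  set c : ℂ := b₂ * Complex.exp (-(f:ℂ) * Complex.I) with hc
  set a : ℝ := b₁.re with ha'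
  set b : ℝ := b₁.im with hb'
  set p : ℝ := c.re with hp'
  set q : ℝ := c.im with hq'
  -- pointwise identities
  have hx' : ∀ ω, x ω = a * (m ω^2 + n ω^2) + p * m ω + q * n ω := by
    intro ω
    rw [hx, hh]
    have habs : ((‖(m ω:ℂ) + (n ω:ℂ) * Complex.I‖ : ℝ) : ℂ) ^ 2
        = ((m ω^2 + n ω^2 : ℝ) : ℂ) := by
      rw [← Complex.ofReal_pow, Complex.sq_norm, Complex.normSq_add_mul_I]
    rw [habs]
    simp only [hc, ha', hb', hp', hq', Complex.add_re, Complex.mul_re, Complex.mul_im,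
      Complex.ofReal_re, Complex.ofReal_im, map_add, map_mul, Complex.conj_ofReal,
      Complex.conj_I, Complex.add_im, Complex.neg_re, Complex.neg_im, Complex.I_re, Complex.I_im]
    ring
  have hk' : ∀ ω, k ω = (a^2 + b^2) * (m ω^2 + n ω^2) + (p^2 + q^2)
      + (2*(p*a + q*b)) * m ω + (2*(q*a - p*b)) * n ω := by
    intro ω
    rw [hk, hh, Complex.sq_norm, Complex.normSq_apply]
    simp only [hc, ha', hb', hp', hq', Complex.add_re, Complex.add_im, Complex.mul_re,
      Complex.mul_im, Complex.ofReal_re, Complex.ofReal_im, Complex.I_re, Complex.I_im]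
    ring
  -- constants
  have hA : a = ‖b₁‖ * Real.cos φ₁ := by
    rw [ha']
    conv_lhs => rw [hb₁]
    simp [Complex.mul_re, Complex.exp_ofReal_mul_I_re, Complex.ofReal_re, Complex.ofReal_im]
  have hB : a^2 + b^2 = ‖b₁‖ ^ 2 := by
    rw [ha', hb', Complex.sq_norm, Complex.normSq_apply]; ring
  have hC : p^2 + q^2 = ‖b₂‖ ^ 2 := by
    have h1 : p^2 + q^2 = ‖c‖ ^ 2 := by
      rw [hp', hq', Complex.sq_norm, Complex.normSq_apply]; ring
    rw [h1, hc, norm_mul, Complex.norm_exp]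
    simp
  -- moments of m and n
  have Im' : ∀ i : ℕ, Integrable (fun ω => m ω ^ i) μ := by
    intro i
    have h1 := aux_IG i
    rw [← hm] at h1
    have h2 := (integrable_map_measure ((measurable_id.pow_const i).aestronglyMeasurable)
      hmeas_m.aemeasurable).mp h1
    exact h2
  have In' : ∀ i : ℕ, Integrable (fun ω => n ω ^ i) μ := by
    intro i
    have h1 := aux_IG i
    rw [← hn] at h1
    have h2 := (integrable_map_measure ((measurable_id.pow_const i).aestronglyMeasurable)
      hmeas_n.aemeasurable).mp h1
    exact h2
  have Em' : ∀ i : ℕ, i < 5 → ∫ ω, m ω ^ i ∂μ = auxMom i := by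
    intro i hi
    rw [← aux_MG i hi, ← hm,
      integral_map hmeas_m.aemeasurable
        (show AEStronglyMeasurable (fun y : ℝ => y ^ i) _ from
          (measurable_id.pow_const i).aestronglyMeasurable)]
  have En' : ∀ i : ℕ, i < 5 → ∫ ω, n ω ^ i ∂μ = auxMom i := by
    intro i hi
    rw [← aux_MG i hi, ← hn,
      integral_map hmeas_n.aemeasurable
        (show AEStronglyMeasurable (fun y : ℝ => y ^ i) _ from
          (measurable_id.pow_const i).aestronglyMeasurable)]
  have indep_pow : ∀ i j : ℕ, IndepFun (fun ω => m ω ^ i) (fun ω => n ω ^ j) μ :=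
    fun i j => hmn.comp (measurable_id.pow_const i) (measurable_id.pow_const j)
  have Imn : ∀ i j : ℕ, Integrable (fun ω => m ω ^ i * n ω ^ j) μ :=
    fun i j => (indep_pow i j).integrable_mul (Im' i) (In' j)
  have Emn : ∀ i j : ℕ, i < 5 → j < 5 →
      ∫ ω, m ω ^ i * n ω ^ j ∂μ = auxMom i * auxMom j := by
    intro i j hi hj
    have h1 := (indep_pow i j).integral_mul_eq_mul_integral (Im' i).aestronglyMeasurable (In' j).aestronglyMeasurable
    rw [show ((fun ω => m ω ^ i) * fun ω => n ω ^ j) = fun ω => m ω ^ i * n ω ^ j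
      from rfl] at h1
    rw [h1, Em' i hi, En' j hj]
  have key : ∀ C : ℕ → ℕ → ℝ,
      ∫ ω, (∑ i ∈ Finset.range 5, ∑ j ∈ Finset.range 5, C i j * (m ω ^ i * n ω ^ j)) ∂μ
        = ∑ i ∈ Finset.range 5, ∑ j ∈ Finset.range 5, C i j * (auxMom i * auxMom j) := by
    intro C
    rw [integral_finset_sum _ (fun i _ => integrable_finset_sum _
      (fun j _ => (Imn i j).const_mul (C i j)))]
    refine Finset.sum_congr rfl fun i hi => ?_
    rw [integral_finset_sum _ (fun j _ => (Imn i j).const_mul (C i j))]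
    refine Finset.sum_congr rfl fun j hj => ?_
    rw [integral_const_mul, Emn i j (Finset.mem_range.mp hi) (Finset.mem_range.mp hj)]
  -- the three integrals
  have Ex : ∫ ω, x ω ∂μ = a := by
    have he : ∀ ω, x ω = ∑ i ∈ Finset.range 5, ∑ j ∈ Finset.range 5,
        (fun i j => if i = 2 ∧ j = 0 then a else if i = 0 ∧ j = 2 then a
          else if i = 1 ∧ j = 0 then p else if i = 0 ∧ j = 1 then q else 0) i j
          * (m ω ^ i * n ω ^ j) := by
      intro ω
      rw [hx' ω]
      simp only [Finset.sum_range_succ, Finset.sum_range_zero]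
      norm_num
      ring
    rw [integral_congr_ae (Filter.Eventually.of_forall he), key]
    simp only [Finset.sum_range_succ, Finset.sum_range_zero, auxMom]
    norm_num
    try ring
  have Ek : ∫ ω, k ω ∂μ = (a^2+b^2) + (p^2+q^2) := by
    have he : ∀ ω, k ω = ∑ i ∈ Finset.range 5, ∑ j ∈ Finset.range 5,
        (fun i j => if i = 2 ∧ j = 0 then a^2+b^2 else if i = 0 ∧ j = 2 then a^2+b^2
          else if i = 0 ∧ j = 0 then p^2+q^2
          else if i = 1 ∧ j = 0 then 2*(p*a+q*b)
          else if i = 0 ∧ j = 1 then 2*(q*a-p*b) else 0) i j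
          * (m ω ^ i * n ω ^ j) := by
      intro ω
      rw [hk' ω]
      simp only [Finset.sum_range_succ, Finset.sum_range_zero]
      norm_num
      ring
    rw [integral_congr_ae (Filter.Eventually.of_forall he), key]
    simp only [Finset.sum_range_succ, Finset.sum_range_zero, auxMom]
    norm_num
    try ring
  have Exk : ∫ ω, x ω * k ω ∂μ = 2*a*(a^2+b^2) + 2*a*(p^2+q^2) := by
    have he : ∀ ω, x ω * k ω = ∑ i ∈ Finset.range 5, ∑ j ∈ Finset.range 5,
        (fun i j =>
          if i = 4 ∧ j = 0 then a*(a^2+b^2)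
          else if i = 2 ∧ j = 2 then 2*a*(a^2+b^2)
          else if i = 0 ∧ j = 4 then a*(a^2+b^2)
          else if i = 2 ∧ j = 0 then a*(p^2+q^2) + p*(2*(p*a+q*b))
          else if i = 0 ∧ j = 2 then a*(p^2+q^2) + q*(2*(q*a-p*b))
          else if i = 3 ∧ j = 0 then a*(2*(p*a+q*b)) + p*(a^2+b^2)
          else if i = 2 ∧ j = 1 then a*(2*(q*a-p*b)) + q*(a^2+b^2)
          else if i = 1 ∧ j = 2 then a*(2*(p*a+q*b)) + p*(a^2+b^2)
          else if i = 0 ∧ j = 3 then a*(2*(q*a-p*b)) + q*(a^2+b^2)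
          else if i = 1 ∧ j = 0 then p*(p^2+q^2)
          else if i = 0 ∧ j = 1 then q*(p^2+q^2)
          else if i = 1 ∧ j = 1 then p*(2*(q*a-p*b)) + q*(2*(p*a+q*b))
          else 0) i j
          * (m ω ^ i * n ω ^ j) := by
      intro ω
      rw [hx' ω, hk' ω]
      simp only [Finset.sum_range_succ, Finset.sum_range_zero]
      norm_num
      ring
    rw [integral_congr_ae (Filter.Eventually.of_forall he), key]
    simp only [Finset.sum_range_succ, Finset.sum_range_zero, auxMom]
    norm_num
    try ring
  rw [Ex, Ek, Exk]
  linear_combination (‖b₁‖^2 + ‖b₂‖^2) * hA + a * hB + a * hC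
end

section
/- With x̃ = Re(b₁ e^{if} h) and k = |b₁ h + b₂ e^{-if}|², where h = m+i·n, m,n i.i.d. N(0,1/2), b₁ = |b₁|e^{iφ₁}, b₂ = |b₂|e^{iφ₂}, f ∈ ℝ, the covariance Cov(x̃, k) equals |b₁|²|b₂| cos(φ₂); in particular it does not depend on f or φ₁. -/
open MeasureTheory ProbabilityTheory Complex

namespace CovAux

open Real

lemma integrable_pow_mul_gexp (p : ℕ) :
    Integrable (fun x : ℝ => x ^ p * Real.exp (-x ^ 2)) := by
  have h := integrable_rpow_mul_exp_neg_mul_sq (b := 1) one_pos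
    (s := (p : ℝ)) (lt_of_lt_of_le (by norm_num) (Nat.cast_nonneg p))
  simpa [Real.rpow_natCast, neg_one_mul] using h

lemma integral_odd_gexp (g : ℝ → ℝ) (hg : ∀ x, g (-x) = - g x) :
    ∫ x : ℝ, g x = 0 := by
  have h := MeasureTheory.integral_neg_eq_self g (volume : Measure ℝ)
  simp only [hg] at h
  rw [integral_neg] at h
  linarith

lemma J0 : ∫ x : ℝ, Real.exp (-x ^ 2) = Real.sqrt π := by
  simpa [neg_one_mul] using integral_gaussian 1

lemma J1 : ∫ x : ℝ, x ^ 1 * Real.exp (-x ^ 2) = 0 := by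
  apply integral_odd_gexp
  intro x
  rw [neg_sq]
  ring

lemma J3 : ∫ x : ℝ, x ^ 3 * Real.exp (-x ^ 2) = 0 := by
  apply integral_odd_gexp
  intro x
  rw [neg_sq]
  ring

lemma J2 : ∫ x : ℝ, x ^ 2 * Real.exp (-x ^ 2) = Real.sqrt π / 2 := by
  have hd : ∀ x : ℝ, HasDerivAt (fun y : ℝ => y * Real.exp (-y ^ 2))
      (Real.exp (-x ^ 2) - 2 * (x ^ 2 * Real.exp (-x ^ 2))) x := by
    intro x
    have h1 : HasDerivAt (fun y : ℝ => -y ^ 2) (-(2 * x)) x := by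
      simpa using (hasDerivAt_pow 2 x).fun_neg
    have h2 := h1.exp
    have h3 := (hasDerivAt_id x).mul h2
    refine h3.congr_deriv ?_
    simp
    ring
  have hi0 : Integrable (fun x : ℝ => Real.exp (-x ^ 2)) := by
    simpa using integrable_pow_mul_gexp 0
  have hi2 : Integrable (fun x : ℝ => 2 * (x ^ 2 * Real.exp (-x ^ 2))) :=
    (integrable_pow_mul_gexp 2).const_mul 2
  have hint : Integrable (fun x : ℝ =>
      Real.exp (-x ^ 2) - 2 * (x ^ 2 * Real.exp (-x ^ 2))) := hi0.sub hi2
  have hf : Integrable (fun x : ℝ => x * Real.exp (-x ^ 2)) := by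
    simpa using integrable_pow_mul_gexp 1
  have h0 := integral_eq_zero_of_hasDerivAt_of_integrable hd hint hf
  rw [integral_sub hi0 hi2, integral_const_mul, J0] at h0
  linarith

lemma gauss_int (g : ℝ → ℝ) (hg : Measurable g)
    (hi : Integrable (fun x => g x * Real.exp (-x ^ 2))) :
    Integrable g (gaussianReal 0 (1/2)) ∧
    ∫ x, g x ∂(gaussianReal 0 (1/2))
      = (Real.sqrt π)⁻¹ * ∫ x : ℝ, g x * Real.exp (-x ^ 2) := by
  have hv : (1/2 : NNReal) ≠ 0 := by norm_num
  have hpdf : ∀ x : ℝ, gaussianPDFReal 0 (1/2) x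
      = (Real.sqrt π)⁻¹ * Real.exp (-x ^ 2) := by
    intro x
    rw [gaussianPDFReal]
    have hc : ((1/2 : NNReal) : ℝ) = 1/2 := by norm_num
    rw [hc]
    rw [show (2 : ℝ) * π * (1/2) = π by ring]
    norm_num
  set ρ : ℝ → NNReal := fun x => Real.toNNReal ((Real.sqrt π)⁻¹ * Real.exp (-x ^ 2)) with hρ
  have hρm : Measurable ρ := by
    apply Measurable.real_toNNReal
    exact (measurable_const.mul ((measurable_id.pow_const 2).neg.exp))
  have hmeq : gaussianReal 0 (1/2) = volume.withDensity (fun x => ((ρ x : NNReal) : ENNReal)) := by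
    rw [gaussianReal_of_var_ne_zero 0 hv]
    congr 1
    funext x
    rw [gaussianPDF, hpdf x]
    rfl
  have hsmul : (fun x => ρ x • g x) = fun x : ℝ =>
      (Real.sqrt π)⁻¹ * (g x * Real.exp (-x ^ 2)) := by
    funext x
    have hnn : (0:ℝ) ≤ (Real.sqrt π)⁻¹ * Real.exp (-x ^ 2) := by positivity
    simp only [hρ, NNReal.smul_def, Real.coe_toNNReal _ hnn, smul_eq_mul]
    ring
  constructor
  · rw [hmeq, integrable_withDensity_iff_integrable_smul hρm, hsmul]
    exact hi.const_mul _
  · rw [hmeq, integral_withDensity_eq_integral_smul hρm g]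
    calc ∫ x, ρ x • g x = ∫ x : ℝ, (Real.sqrt π)⁻¹ * (g x * Real.exp (-x ^ 2)) := by
          rw [hsmul]
      _ = (Real.sqrt π)⁻¹ * ∫ x : ℝ, g x * Real.exp (-x ^ 2) := integral_const_mul _ _

lemma gint_pow (p : ℕ) :
    Integrable (fun x : ℝ => x ^ p) (gaussianReal 0 (1/2)) ∧
    ∫ x : ℝ, x ^ p ∂(gaussianReal 0 (1/2))
      = (Real.sqrt π)⁻¹ * ∫ x : ℝ, x ^ p * Real.exp (-x ^ 2) :=
  gauss_int _ (measurable_id.pow_const p) (integrable_pow_mul_gexp p)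

lemma gval1 : ∫ x : ℝ, x ^ 1 ∂(gaussianReal 0 (1/2)) = 0 := by
  rw [(gint_pow 1).2, J1, mul_zero]

lemma gval2 : ∫ x : ℝ, x ^ 2 ∂(gaussianReal 0 (1/2)) = 1/2 := by
  rw [(gint_pow 2).2, J2]
  have h : Real.sqrt π ≠ 0 := by positivity
  field_simp

lemma gval3 : ∫ x : ℝ, x ^ 3 ∂(gaussianReal 0 (1/2)) = 0 := by
  rw [(gint_pow 3).2, J3, mul_zero]

lemma comp_fact {Ω : Type*} [MeasurableSpace Ω] {μ : Measure Ω} {X : Ω → ℝ}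
    (hXm : Measurable X) (hX : μ.map X = gaussianReal 0 (1/2)) (p : ℕ) :
    Integrable (fun ω => X ω ^ p) μ ∧
    ∫ ω, X ω ^ p ∂μ = ∫ x : ℝ, x ^ p ∂(gaussianReal 0 (1/2)) := by
  have hg : Measurable fun x : ℝ => x ^ p := measurable_id.pow_const p
  constructor
  · have h := (integrable_map_measure hg.aestronglyMeasurable hXm.aemeasurable).mp
      (by rw [hX]; exact (gint_pow p).1)
    exact h
  · rw [← hX]
    exact (integral_map hXm.aemeasurable hg.aestronglyMeasurable).symm

end CovAux

/-- Covariance of `x̃ = Re(b₁ e^{if} h)` and `k = |b₁ h + b₂ e^{-if}|²`: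
it equals `|b₁|²|b₂| cos(φ₂)`, independent of `f` and `φ₁`. -/
theorem covariance_xt_k
    {Ω : Type*} [MeasurableSpace Ω] (μ : Measure Ω) [IsProbabilityMeasure μ]
    (m n : Ω → ℝ) (hmeas_m : Measurable m) (hmeas_n : Measurable n)
    (hm : μ.map m = gaussianReal 0 (1 / 2)) (hn : μ.map n = gaussianReal 0 (1 / 2))
    (hmn : IndepFun m n μ)
    (h : Ω → ℂ) (hh : ∀ ω, h ω = (m ω : ℂ) + (n ω : ℂ) * Complex.I)
    (f : ℝ) (b₁ b₂ : ℂ)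
    (φ₁ φ₂ : ℝ)
    (hb₁ : b₁ = (‖b₁‖ : ℂ) * Complex.exp (φ₁ * Complex.I))
    (hb₂ : b₂ = (‖b₂‖ : ℂ) * Complex.exp (φ₂ * Complex.I))
    (xt : Ω → ℝ)
    (hxt : ∀ ω, xt ω = (b₁ * Complex.exp ((f : ℂ) * Complex.I) * h ω).re)
    (k : Ω → ℝ)
    (hk : ∀ ω, k ω = ‖b₁ * h ω + b₂ * Complex.exp (-(f : ℂ) * Complex.I)‖ ^ 2) :
    (∫ ω, xt ω * k ω ∂μ) - (∫ ω, xt ω ∂μ) * (∫ ω, k ω ∂μ)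
      = ‖b₁‖ ^ 2 * ‖b₂‖ * Real.cos φ₂ := by
  -- abbreviations
  set p := b₁.re with hp
  set q := b₁.im with hq
  set r := b₂.re with hr
  set s := b₂.im with hs
  set cf := Real.cos f with hcf
  set sf := Real.sin f with hsf
  -- real/imag parts of the exponentials
  have heP_re : (Complex.exp ((f : ℂ) * Complex.I)).re = cf := Complex.exp_ofReal_mul_I_re f
  have heP_im : (Complex.exp ((f : ℂ) * Complex.I)).im = sf := Complex.exp_ofReal_mul_I_im f
  have hneg : -(f : ℂ) * Complex.I = ((-f : ℝ) : ℂ) * Complex.I := by push_cast; ring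
  have heN_re : (Complex.exp (-(f : ℂ) * Complex.I)).re = cf := by
    rw [hneg, Complex.exp_ofReal_mul_I_re, Real.cos_neg]
  have heN_im : (Complex.exp (-(f : ℂ) * Complex.I)).im = -sf := by
    rw [hneg, Complex.exp_ofReal_mul_I_im, Real.sin_neg]
  -- pointwise form of xt
  have hxt' : ∀ ω, xt ω = (p * cf - q * sf) * m ω - (p * sf + q * cf) * n ω := by
    intro ω
    rw [hxt, hh]
    simp only [Complex.mul_re, Complex.mul_im, Complex.add_re, Complex.add_im,
      Complex.ofReal_re, Complex.ofReal_im, Complex.I_re, Complex.I_im,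
      heP_re, heP_im, ← hp, ← hq]
    ring
  -- pointwise form of k
  have hk' : ∀ ω, k ω =
      (p ^ 2 + q ^ 2) * (m ω ^ 2 + n ω ^ 2)
      + 2 * ((p * (r * cf + s * sf) + q * (s * cf - r * sf)) * m ω
          - (q * (r * cf + s * sf) - p * (s * cf - r * sf)) * n ω)
      + ((r * cf + s * sf) ^ 2 + (s * cf - r * sf) ^ 2) := by
    intro ω
    rw [hk, hh, Complex.sq_norm]
    simp only [Complex.normSq_apply, Complex.mul_re, Complex.mul_im, Complex.add_re,
      Complex.add_im, Complex.ofReal_re, Complex.ofReal_im, Complex.I_re, Complex.I_im,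
      heN_re, heN_im, ← hp, ← hq, ← hr, ← hs]
    ring
  -- moments of m and n
  obtain ⟨Im1, Em1'⟩ := CovAux.comp_fact hmeas_m hm 1
  obtain ⟨Im2, Em2'⟩ := CovAux.comp_fact hmeas_m hm 2
  obtain ⟨Im3, Em3'⟩ := CovAux.comp_fact hmeas_m hm 3
  obtain ⟨In1, En1'⟩ := CovAux.comp_fact hmeas_n hn 1
  obtain ⟨In2, En2'⟩ := CovAux.comp_fact hmeas_n hn 2
  obtain ⟨In3, En3'⟩ := CovAux.comp_fact hmeas_n hn 3
  have Em1 : ∫ ω, m ω ^ 1 ∂μ = 0 := Em1'.trans CovAux.gval1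
  have Em2 : ∫ ω, m ω ^ 2 ∂μ = 1/2 := Em2'.trans CovAux.gval2
  have Em3 : ∫ ω, m ω ^ 3 ∂μ = 0 := Em3'.trans CovAux.gval3
  have En1 : ∫ ω, n ω ^ 1 ∂μ = 0 := En1'.trans CovAux.gval1
  have En2 : ∫ ω, n ω ^ 2 ∂μ = 1/2 := En2'.trans CovAux.gval2
  have En3 : ∫ ω, n ω ^ 3 ∂μ = 0 := En3'.trans CovAux.gval3
  -- independence-based product moments
  have hmn11 : IndepFun (fun ω => m ω ^ 1) (fun ω => n ω ^ 1) μ :=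
    hmn.comp (measurable_id.pow_const 1) (measurable_id.pow_const 1)
  have hmn12 : IndepFun (fun ω => m ω ^ 1) (fun ω => n ω ^ 2) μ :=
    hmn.comp (measurable_id.pow_const 1) (measurable_id.pow_const 2)
  have hmn21 : IndepFun (fun ω => m ω ^ 2) (fun ω => n ω ^ 1) μ :=
    hmn.comp (measurable_id.pow_const 2) (measurable_id.pow_const 1)
  have Imn : Integrable (fun ω => m ω ^ 1 * n ω ^ 1) μ := hmn11.integrable_mul Im1 In1
  have Imn2 : Integrable (fun ω => m ω ^ 1 * n ω ^ 2) μ := hmn12.integrable_mul Im1 In2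
  have Im2n : Integrable (fun ω => m ω ^ 2 * n ω ^ 1) μ := hmn21.integrable_mul Im2 In1
  have Emn : ∫ ω, m ω ^ 1 * n ω ^ 1 ∂μ = 0 := by
    have h2 : ∫ ω, m ω ^ 1 * n ω ^ 1 ∂μ = (∫ ω, m ω ^ 1 ∂μ) * ∫ ω, n ω ^ 1 ∂μ :=
      hmn11.integral_fun_mul_eq_mul_integral Im1.aestronglyMeasurable In1.aestronglyMeasurable
    rw [h2, Em1, zero_mul]
  have Emn2 : ∫ ω, m ω ^ 1 * n ω ^ 2 ∂μ = 0 := by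
    have h2 : ∫ ω, m ω ^ 1 * n ω ^ 2 ∂μ = (∫ ω, m ω ^ 1 ∂μ) * ∫ ω, n ω ^ 2 ∂μ :=
      hmn12.integral_fun_mul_eq_mul_integral Im1.aestronglyMeasurable In2.aestronglyMeasurable
    rw [h2, Em1, zero_mul]
  have Em2n : ∫ ω, m ω ^ 2 * n ω ^ 1 ∂μ = 0 := by
    have h2 : ∫ ω, m ω ^ 2 * n ω ^ 1 ∂μ = (∫ ω, m ω ^ 2 ∂μ) * ∫ ω, n ω ^ 1 ∂μ :=
      hmn21.integral_fun_mul_eq_mul_integral Im2.aestronglyMeasurable In1.aestronglyMeasurable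
    rw [h2, En1, mul_zero]
  -- name the coefficients
  set A : ℝ := p ^ 2 + q ^ 2 with hA
  set wr : ℝ := p * (r * cf + s * sf) + q * (s * cf - r * sf) with hwr
  set wi : ℝ := q * (r * cf + s * sf) - p * (s * cf - r * sf) with hwi
  set D : ℝ := (r * cf + s * sf) ^ 2 + (s * cf - r * sf) ^ 2 with hD
  set cr : ℝ := p * cf - q * sf with hcr
  set ci : ℝ := p * sf + q * cf with hci
  -- expectation of xt is zero
  have Ext : ∫ ω, xt ω ∂μ = 0 := by
    have hfun : (fun ω => xt ω) = fun ω => cr * m ω ^ 1 - ci * n ω ^ 1 := by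
      funext ω; rw [hxt' ω]; ring
    rw [hfun, integral_sub (Im1.const_mul cr) (In1.const_mul ci),
      integral_const_mul, integral_const_mul, Em1, En1]
    ring
  -- the big expansion of xt * k
  have key : (fun ω => xt ω * k ω) = fun ω =>
      (A * cr) * m ω ^ 3 + (A * cr) * (m ω ^ 1 * n ω ^ 2)
      - (A * ci) * (m ω ^ 2 * n ω ^ 1) - (A * ci) * n ω ^ 3
      + (2 * cr * wr) * m ω ^ 2 + (2 * ci * wi) * n ω ^ 2
      - (2 * (cr * wi + ci * wr)) * (m ω ^ 1 * n ω ^ 1)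
      + (D * cr) * m ω ^ 1 - (D * ci) * n ω ^ 1 := by
    funext ω
    rw [hxt' ω, hk' ω]
    ring
  -- integrability of the pieces
  have i1 : Integrable (fun ω => (A * cr) * m ω ^ 3) μ := Im3.const_mul (A * cr)
  have i2 : Integrable (fun ω => (A * cr) * (m ω ^ 1 * n ω ^ 2)) μ := Imn2.const_mul (A * cr)
  have i3 : Integrable (fun ω => (A * ci) * (m ω ^ 2 * n ω ^ 1)) μ := Im2n.const_mul (A * ci)
  have i4 : Integrable (fun ω => (A * ci) * n ω ^ 3) μ := In3.const_mul (A * ci)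
  have i5 : Integrable (fun ω => (2 * cr * wr) * m ω ^ 2) μ := Im2.const_mul (2 * cr * wr)
  have i6 : Integrable (fun ω => (2 * ci * wi) * n ω ^ 2) μ := In2.const_mul (2 * ci * wi)
  have i7 : Integrable (fun ω => (2 * (cr * wi + ci * wr)) * (m ω ^ 1 * n ω ^ 1)) μ :=
    Imn.const_mul (2 * (cr * wi + ci * wr))
  have i8 : Integrable (fun ω => (D * cr) * m ω ^ 1) μ := Im1.const_mul (D * cr)
  have i9 : Integrable (fun ω => (D * ci) * n ω ^ 1) μ := In1.const_mul (D * ci)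
  have h2 : Integrable (fun ω => (A * cr) * m ω ^ 3 + (A * cr) * (m ω ^ 1 * n ω ^ 2)) μ :=
    i1.add i2
  have h3 : Integrable (fun ω => (A * cr) * m ω ^ 3 + (A * cr) * (m ω ^ 1 * n ω ^ 2)
      - (A * ci) * (m ω ^ 2 * n ω ^ 1)) μ := h2.sub i3
  have h4 : Integrable (fun ω => (A * cr) * m ω ^ 3 + (A * cr) * (m ω ^ 1 * n ω ^ 2)
      - (A * ci) * (m ω ^ 2 * n ω ^ 1) - (A * ci) * n ω ^ 3) μ := h3.sub i4
  have h5 : Integrable (fun ω => (A * cr) * m ω ^ 3 + (A * cr) * (m ω ^ 1 * n ω ^ 2)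
      - (A * ci) * (m ω ^ 2 * n ω ^ 1) - (A * ci) * n ω ^ 3
      + (2 * cr * wr) * m ω ^ 2) μ := h4.add i5
  have h6 : Integrable (fun ω => (A * cr) * m ω ^ 3 + (A * cr) * (m ω ^ 1 * n ω ^ 2)
      - (A * ci) * (m ω ^ 2 * n ω ^ 1) - (A * ci) * n ω ^ 3
      + (2 * cr * wr) * m ω ^ 2 + (2 * ci * wi) * n ω ^ 2) μ := h5.add i6
  have h7 : Integrable (fun ω => (A * cr) * m ω ^ 3 + (A * cr) * (m ω ^ 1 * n ω ^ 2)
      - (A * ci) * (m ω ^ 2 * n ω ^ 1) - (A * ci) * n ω ^ 3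
      + (2 * cr * wr) * m ω ^ 2 + (2 * ci * wi) * n ω ^ 2
      - (2 * (cr * wi + ci * wr)) * (m ω ^ 1 * n ω ^ 1)) μ := h6.sub i7
  have h8 : Integrable (fun ω => (A * cr) * m ω ^ 3 + (A * cr) * (m ω ^ 1 * n ω ^ 2)
      - (A * ci) * (m ω ^ 2 * n ω ^ 1) - (A * ci) * n ω ^ 3
      + (2 * cr * wr) * m ω ^ 2 + (2 * ci * wi) * n ω ^ 2
      - (2 * (cr * wi + ci * wr)) * (m ω ^ 1 * n ω ^ 1)
      + (D * cr) * m ω ^ 1) μ := h7.add i8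
  -- compute the integral of xt * k
  have Extk : ∫ ω, xt ω * k ω ∂μ = cr * wr + ci * wi := by
    rw [key]
    rw [integral_sub h8 i9, integral_add h7 i8, integral_sub h6 i7, integral_add h5 i6,
      integral_add h4 i5, integral_sub h3 i4, integral_sub h2 i3, integral_add i1 i2]
    simp only [integral_const_mul]
    rw [Em1, Em2, Em3, En1, En2, En3, Emn, Emn2, Em2n]
    ring
  rw [Extk, Ext, zero_mul, sub_zero]
  -- final algebra
  have habs1 : ‖b₁‖ ^ 2 = p ^ 2 + q ^ 2 := by
    rw [Complex.sq_norm, Complex.normSq_apply, ← hp, ← hq]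
    ring
  have hb2re : r = ‖b₂‖ * Real.cos φ₂ := by
    rw [hr]
    conv_lhs => rw [hb₂]
    simp [Complex.mul_re, Complex.exp_ofReal_mul_I_re, Complex.exp_ofReal_mul_I_im]
  have htrig : sf ^ 2 + cf ^ 2 = 1 := by
    rw [hsf, hcf]; exact Real.sin_sq_add_cos_sq f
  have hfin : cr * wr + ci * wi = (p ^ 2 + q ^ 2) * r := by
    rw [hcr, hci, hwr, hwi]
    linear_combination ((p ^ 2 + q ^ 2) * r) * htrig
  rw [hfin, hb2re, ← habs1]
  ring
end
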